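/- arXiv:1301.0986 — 7 statements merged into one kernel-verified Lean document; each statement's English description precedes it below -/
import Mathlib

section
/- For matrices A (m×n) and B (m×k), the rank of the row block matrix [A, B] equals rank(A) + rank((I − AA†)B), where A† is the Moore–Penrose inverse of A. -/
open Matrix
open scoped ComplexOrder

def IsMoorePenrose {m n : Type*} [Fintype m] [Fintype n]
    (A : Matrix m n ℂ) (X : Matrix n m ℂ) : Prop :=
  A * X * A = A ∧ X * A * X = X ∧ (A * X)ᴴ = A * X ∧ (X * A)ᴴ = X * A

open Classical in
noncomputable def pinv {m n : Type*} [Fintype m] [Fintype n]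
    (A : Matrix m n ℂ) : Matrix n m ℂ :=
  if h : ∃ X, IsMoorePenrose A X then h.choose else 0

/-!
For any `X` with `A * X * A = A`, the matrix `P = A * X` is an idempotent fixing the column space
of `A`. Subtracting `A * (X * B)` from `B` is a column operation, so `[A, B]` has the rank of
`[A, (1 - P) * B]`, and the column spaces of `A` and `(1 - P) * B` meet only in `0`, since `P`
fixes the first and kills the second.

A Moore–Penrose inverse of `A` is `(Aᴴ * A)⁺ * Aᴴ`, where `(Aᴴ * A)⁺` applies `x ↦ x⁻¹` (with
`0⁻¹ = 0`) to the eigenvalues of the Hermitian matrix `Aᴴ * A`; it is an inner inverse because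
`Aᴴ * A * Z = 0` forces `A * Z = 0`.
-/

namespace Matrix

section Rank

variable {R : Type*} [Field R] {m n₁ n₂ : Type*} [Fintype n₁] [Fintype n₂]

theorem range_mulVecLin_fromCols (A : Matrix m n₁ R) (B : Matrix m n₂ R) :
    LinearMap.range (fromCols A B).mulVecLin =
      LinearMap.range A.mulVecLin ⊔ LinearMap.range B.mulVecLin := by
  have hcol : (fromCols A B).col = Sum.elim A.col B.col := by
    ext (i | i) j <;> rfl
  rw [range_mulVecLin, range_mulVecLin, range_mulVecLin, hcol, Set.Sum.elim_range,
    Submodule.span_union]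

theorem rank_fromCols_of_disjoint {A : Matrix m n₁ R} {B : Matrix m n₂ R}
    (h : Disjoint (LinearMap.range A.mulVecLin) (LinearMap.range B.mulVecLin)) :
    (fromCols A B).rank = A.rank + B.rank := by
  have hsup := Submodule.finrank_sup_add_finrank_inf_eq
    (LinearMap.range A.mulVecLin) (LinearMap.range B.mulVecLin)
  rw [h.eq_bot, finrank_bot, add_zero] at hsup
  rw [rank, range_mulVecLin_fromCols, hsup, rank, rank]

theorem rank_fromCols_sub_mul (A : Matrix m n₁ R) (B : Matrix m n₂ R) (C : Matrix n₁ n₂ R) :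
    (fromCols A (B - A * C)).rank = (fromCols A B).rank := by
  classical
  have hdet : IsUnit (fromBlocks 1 (-C) 0 (1 : Matrix n₂ n₂ R)).det := by simp
  rw [← rank_mul_eq_left_of_isUnit_det _ (fromCols A B) hdet, fromCols_mul_fromBlocks]
  simp only [Matrix.mul_one, Matrix.mul_zero, add_zero, Matrix.mul_neg, neg_add_eq_sub]

end Rank

section InnerInverse

variable {R : Type*} [Field R] {m n k : Type*} [Fintype m] [Fintype n] [Fintype k] [DecidableEq m]
  {A : Matrix m n R} {X : Matrix n m R}

theorem disjoint_range_mulVecLin_one_sub_mul_mul (hX : A * X * A = A) (B : Matrix m k R) :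
    Disjoint (LinearMap.range A.mulVecLin) (LinearMap.range ((1 - A * X) * B).mulVecLin) := by
  have hP : A * X * (A * X) = A * X := by rw [← Matrix.mul_assoc, hX]
  rw [Submodule.disjoint_def]
  rintro _ ⟨u, rfl⟩ ⟨w, hw⟩
  have hfix : (A * X) *ᵥ (A *ᵥ u) = A *ᵥ u := by rw [mulVec_mulVec, hX]
  have hkill : (A * X) *ᵥ (((1 - A * X) * B) *ᵥ w) = 0 := by
    rw [mulVec_mulVec, ← Matrix.mul_assoc, Matrix.mul_sub, Matrix.mul_one, hP, sub_self,
      Matrix.zero_mul, zero_mulVec]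
  simp only [mulVecLin_apply] at hw ⊢
  rw [← hfix, ← hw, hkill]

theorem rank_fromCols_eq_add_rank_one_sub_mul_mul (hX : A * X * A = A) (B : Matrix m k R) :
    (fromCols A B).rank = A.rank + ((1 - A * X) * B).rank := by
  rw [← rank_fromCols_of_disjoint (disjoint_range_mulVecLin_one_sub_mul_mul hX B),
    Matrix.sub_mul, Matrix.one_mul, Matrix.mul_assoc, rank_fromCols_sub_mul]

end InnerInverse

section Hermitian

variable {𝕜 n : Type*} [RCLike 𝕜] [Fintype n] [DecidableEq n] {H : Matrix n n 𝕜}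

theorem cfc_mul_cfc_mul_cfc (f g h : ℝ → ℝ) (H : Matrix n n 𝕜) :
    cfc f H * cfc g H * cfc h H = cfc (fun x ↦ f x * g x * h x) H := by
  have hfin := H.finite_real_spectrum
  rw [cfc_mul _ _ H (hfin.continuousOn _) (hfin.continuousOn _),
    cfc_mul _ _ H (hfin.continuousOn _) (hfin.continuousOn _)]

theorem IsHermitian.mul_cfc_inv_mul_self (hH : H.IsHermitian) :
    H * cfc (·⁻¹ : ℝ → ℝ) H * H = H := by
  simpa only [mul_inv_mul_cancel, cfc_id' ℝ H hH.isSelfAdjoint] using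
    cfc_mul_cfc_mul_cfc (fun x ↦ x) (·⁻¹) (fun x ↦ x) H

theorem IsHermitian.cfc_inv_mul_self_mul_cfc_inv (hH : H.IsHermitian) :
    cfc (·⁻¹ : ℝ → ℝ) H * H * cfc (·⁻¹ : ℝ → ℝ) H = cfc (·⁻¹ : ℝ → ℝ) H := by
  have hinv (x : ℝ) : x⁻¹ * x * x⁻¹ = x⁻¹ := by simpa using mul_inv_mul_cancel x⁻¹
  simpa only [hinv, cfc_id' ℝ H hH.isSelfAdjoint] using
    cfc_mul_cfc_mul_cfc (·⁻¹) (fun x ↦ x) (·⁻¹) H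

end Hermitian

section MoorePenrose

variable {m n : Type*} [Fintype m] [Fintype n] [DecidableEq n]

theorem isMoorePenrose_cfc_inv_mul_conjTranspose (A : Matrix m n ℂ) :
    IsMoorePenrose A (cfc (·⁻¹ : ℝ → ℝ) (Aᴴ * A) * Aᴴ) := by
  set H := Aᴴ * A
  set Y := cfc (·⁻¹ : ℝ → ℝ) H
  have hH : H.IsHermitian := isHermitian_conjTranspose_mul_self A
  have hY : Yᴴ = Y := cfc_predicate (·⁻¹ : ℝ → ℝ) H
  have hYH : Commute Y H := by
    simpa only [cfc_id' ℝ H hH.isSelfAdjoint] using cfc_commute_cfc (·⁻¹ : ℝ → ℝ) (fun x ↦ x) H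
  have hAYH : A * (Y * H) = A := by
    have hker : H * (Y * H - 1) = 0 := by
      rw [Matrix.mul_sub, ← Matrix.mul_assoc, hH.mul_cfc_inv_mul_self, Matrix.mul_one, sub_self]
    rwa [conjTranspose_mul_self_mul_eq_zero, Matrix.mul_sub, Matrix.mul_one, sub_eq_zero] at hker
  refine ⟨?_, ?_, ?_, ?_⟩
  · simpa only [Matrix.mul_assoc] using hAYH
  · calc Y * Aᴴ * A * (Y * Aᴴ) = Y * H * Y * Aᴴ := by simp only [H, Matrix.mul_assoc]
      _ = Y * Aᴴ := by rw [hH.cfc_inv_mul_self_mul_cfc_inv]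
  · simp only [conjTranspose_mul, conjTranspose_conjTranspose, hY, Matrix.mul_assoc]
  · calc (Y * Aᴴ * A)ᴴ = (Y * H)ᴴ := by rw [Matrix.mul_assoc]
      _ = Y * Aᴴ * A := by rw [conjTranspose_mul, hH.eq, hY, ← hYH.eq, Matrix.mul_assoc]

theorem pinv_isMoorePenrose (A : Matrix m n ℂ) : IsMoorePenrose A (pinv A) := by
  have h : ∃ X, IsMoorePenrose A X := ⟨_, isMoorePenrose_cfc_inv_mul_conjTranspose A⟩
  rw [pinv, dif_pos h]
  exact h.choose_spec

end MoorePenrose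

end Matrix

theorem rank_fromColumns_eq {m n k : ℕ} (A : Matrix (Fin m) (Fin n) ℂ)
    (B : Matrix (Fin m) (Fin k) ℂ) :
    (Matrix.fromCols A B).rank = A.rank + ((1 - A * pinv A) * B).rank :=
  rank_fromCols_eq_add_rank_one_sub_mul_mul (pinv_isMoorePenrose A).1 B
end

section
/- Let A be an m×m Hermitian matrix and B an m×n matrix with A positive semidefinite. Then for the Hermitian block matrix M = [[A, B],[B*, 0]], one has i₊(M) = rank([A, B]), i₋(M) = rank(B), and rank(M) = rank([A, B]) + rank(B). -/
/-!
Write `C = [A, B]` and `N = m + n`. On `V₁ = {(x, y) | Cᴴ x = 0}`, of dimension `N - rank C`, the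
form `zᴴ M z` vanishes, and on `V₂ = {(x, y) | B y = 0}`, of dimension `N - rank B`, it equals
`xᴴ A x ≥ 0`. A subspace on which the form is `≤ 0` (resp. `≥ 0`) meets the span of the
eigenvectors of positive (resp. negative) eigenvalues trivially, so `i₊ ≤ rank C` and
`i₋ ≤ rank B`. Conversely, `A ⪰ 0` forces `ker M ⊆ V₁ ∩ V₂`, and `V₁ + V₂` is everything, so
`rank M ≥ rank C + rank B`. As `rank M = i₊ + i₋`, all three inequalities are equalities.
-/

open Matrix
open scoped ComplexOrder

noncomputable def iPos {n : Type*} [Fintype n] [DecidableEq n] (A : Matrix n n ℂ) : ℕ :=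
  if h : A.IsHermitian then Nat.card {i // 0 < h.eigenvalues i} else 0

noncomputable def iNeg {n : Type*} [Fintype n] [DecidableEq n] (A : Matrix n n ℂ) : ℕ :=
  if h : A.IsHermitian then Nat.card {i // h.eigenvalues i < 0} else 0

open Module

lemma finrank_add_card_pos_le_of_sum_mul_normSq_nonpos {ι E : Type*} [Fintype ι]
    [AddCommGroup E] [Module ℂ E] (d : ι → ℝ) {T : E →ₗ[ℂ] ι → ℂ} (hT : Function.Injective T)
    {V : Submodule ℂ E} (hV : ∀ x ∈ V, ∑ i, d i * Complex.normSq (T x i) ≤ 0) :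
    finrank ℂ V + Fintype.card {i // 0 < d i} ≤ Fintype.card ι := by
  classical
  let P : V →ₗ[ℂ] {i // ¬ 0 < d i} → ℂ := LinearMap.funLeft ℂ ℂ Subtype.val ∘ₗ T ∘ₗ V.subtype
  have hP : Function.Injective P := by
    rw [← LinearMap.ker_eq_bot, LinearMap.ker_eq_bot']
    rintro ⟨x, hxV⟩ hx
    have hvanish : ∀ i, ¬ 0 < d i → T x i = 0 := fun i hi => congrFun hx ⟨i, hi⟩
    have hterm : ∀ i, 0 ≤ d i * Complex.normSq (T x i) := fun i => by
      by_cases hi : 0 < d i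
      · exact mul_nonneg hi.le (Complex.normSq_nonneg _)
      · simp [hvanish i hi]
    have hzero := (Finset.sum_eq_zero_iff_of_nonneg fun i _ => hterm i).mp
      (le_antisymm (hV x hxV) (Finset.sum_nonneg fun i _ => hterm i))
    have hTx : T x = 0 := funext fun i => by
      by_cases hi : 0 < d i
      · simpa [hi.ne'] using hzero i (Finset.mem_univ i)
      · exact hvanish i hi
    exact Subtype.ext (hT (hTx.trans (map_zero T).symm))
  have hdim := LinearMap.finrank_le_finrank_of_injective hP
  rw [finrank_fintype_fun_eq_card, Fintype.card_subtype_compl] at hdim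
  have := Fintype.card_subtype_le fun i => 0 < d i
  omega

namespace Matrix

lemma star_dotProduct_diagonal_ofReal_mulVec {ι : Type*} [Fintype ι] [DecidableEq ι]
    (d : ι → ℝ) (y : ι → ℂ) :
    star y ⬝ᵥ diagonal (RCLike.ofReal ∘ d) *ᵥ y = ((∑ i, d i * Complex.normSq (y i) : ℝ) : ℂ) := by
  simp only [dotProduct, mulVec_diagonal, Function.comp_apply, Pi.star_apply, RCLike.star_def,
    Complex.coe_algebraMap]
  push_cast
  refine Finset.sum_congr rfl fun i _ => ?_
  rw [Complex.normSq_eq_conj_mul_self]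
  ring

lemma star_dotProduct_mulVec_eq_star_conjTranspose_mulVec {ι κ : Type*} [Fintype ι] [Fintype κ]
    (K : Matrix ι κ ℂ) (x : ι → ℂ) (y : κ → ℂ) : star x ⬝ᵥ K *ᵥ y = star (Kᴴ *ᵥ x) ⬝ᵥ y := by
  rw [star_mulVec, conjTranspose_conjTranspose, dotProduct_mulVec]

lemma finrank_ker_mulVecLin_comp_funLeft_add_rank {R κ γ δ : Type*} [Field R] [Fintype γ]
    [Fintype δ] (K : Matrix κ γ R) {e : γ → δ} (he : Function.Injective e) :
    finrank R (LinearMap.ker (K.mulVecLin ∘ₗ LinearMap.funLeft R R e)) + K.rank =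
      Fintype.card δ := by
  have hrange : LinearMap.range (K.mulVecLin ∘ₗ LinearMap.funLeft R R e) =
      LinearMap.range K.mulVecLin :=
    LinearMap.range_comp_of_range_eq_top _
      (LinearMap.range_eq_top.mpr (LinearMap.funLeft_surjective_of_injective R R e he))
  rw [← finrank_fintype_fun_eq_card R, ← LinearMap.finrank_range_add_finrank_ker
    (K.mulVecLin ∘ₗ LinearMap.funLeft R R e), hrange, add_comm]
  rfl

namespace IsHermitian

variable {ι : Type*} [Fintype ι] [DecidableEq ι] {M : Matrix ι ι ℂ} (hM : M.IsHermitian)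

lemma star_dotProduct_mulVec_eq_sum (x : ι → ℂ) :
    star x ⬝ᵥ M *ᵥ x = ((∑ i, hM.eigenvalues i *
      Complex.normSq (((hM.eigenvectorUnitary : Matrix ι ι ℂ)ᴴ *ᵥ x) i) : ℝ) : ℂ) := by
  conv_lhs => rw [hM.spectral_theorem, Unitary.conjStarAlgAut_apply]
  rw [← mulVec_mulVec, ← mulVec_mulVec, dotProduct_mulVec, star_eq_conjTranspose,
    ← conjTranspose_conjTranspose (hM.eigenvectorUnitary : Matrix ι ι ℂ), ← star_mulVec,
    conjTranspose_conjTranspose, star_dotProduct_diagonal_ofReal_mulVec]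

lemma conjTranspose_eigenvectorUnitary_mulVec_injective :
    Function.Injective ((hM.eigenvectorUnitary : Matrix ι ι ℂ)ᴴ.mulVecLin) :=
  Function.LeftInverse.injective (g := (hM.eigenvectorUnitary : Matrix ι ι ℂ).mulVecLin)
    fun x => by simp [mulVec_mulVec, ← star_eq_conjTranspose]

lemma card_pos_eigenvalues_add_finrank_le {V : Submodule ℂ (ι → ℂ)}
    (hV : ∀ x ∈ V, star x ⬝ᵥ M *ᵥ x ≤ 0) :
    Fintype.card {i // 0 < hM.eigenvalues i} + finrank ℂ V ≤ Fintype.card ι := by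
  have := finrank_add_card_pos_le_of_sum_mul_normSq_nonpos hM.eigenvalues
    hM.conjTranspose_eigenvectorUnitary_mulVec_injective (V := V) fun x hx => by
      have hx := hV x hx
      rw [hM.star_dotProduct_mulVec_eq_sum] at hx
      exact_mod_cast hx
  omega

lemma card_neg_eigenvalues_add_finrank_le {V : Submodule ℂ (ι → ℂ)}
    (hV : ∀ x ∈ V, 0 ≤ star x ⬝ᵥ M *ᵥ x) :
    Fintype.card {i // hM.eigenvalues i < 0} + finrank ℂ V ≤ Fintype.card ι := by
  have := finrank_add_card_pos_le_of_sum_mul_normSq_nonpos (-hM.eigenvalues)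
    hM.conjTranspose_eigenvectorUnitary_mulVec_injective (V := V) fun x hx => by
      simpa only [hM.star_dotProduct_mulVec_eq_sum, Complex.zero_le_real, Pi.neg_apply, neg_mul,
        Finset.sum_neg_distrib, neg_nonpos, mulVecLin_apply] using hV x hx
  simp only [Pi.neg_apply, neg_pos] at this
  omega

lemma rank_eq_card_pos_add_card_neg :
    M.rank = Fintype.card {i // 0 < hM.eigenvalues i} +
      Fintype.card {i // hM.eigenvalues i < 0} := by
  rw [hM.rank_eq_card_non_zero_eigs, ← Fintype.card_subtype_or_disjoint]
  · exact Fintype.card_congr (Equiv.subtypeEquivRight fun i => by rw [ne_comm, ne_iff_lt_or_gt])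
  · exact Pi.disjoint_iff.mpr fun i => Prop.disjoint_iff.mpr fun h => lt_asymm h.1 h.2

end IsHermitian

section Bordered

variable {α β : Type*} [Fintype α] [Fintype β]

lemma star_sumElim_dotProduct_fromBlocks_mulVec (A : Matrix α α ℂ) (B : Matrix α β ℂ)
    (x : α → ℂ) (y : β → ℂ) :
    star (Sum.elim x y) ⬝ᵥ fromBlocks A B Bᴴ 0 *ᵥ Sum.elim x y =
      star x ⬝ᵥ A *ᵥ x + star (Bᴴ *ᵥ x) ⬝ᵥ y + star y ⬝ᵥ Bᴴ *ᵥ x := by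
  simp only [fromBlocks_mulVec, Function.star_sumElim, sumElim_dotProduct_sumElim,
    Sum.elim_comp_inl, Sum.elim_comp_inr, zero_mulVec, add_zero, dotProduct_add]
  rw [star_dotProduct_mulVec_eq_star_conjTranspose_mulVec B]

lemma card_pos_eigenvalues_fromBlocks_le [DecidableEq α] [DecidableEq β] (A : Matrix α α ℂ)
    (B : Matrix α β ℂ) (hM : (fromBlocks A B Bᴴ 0).IsHermitian) :
    Fintype.card {i // 0 < hM.eigenvalues i} ≤ (fromCols A B).rank := by
  have hV := hM.card_pos_eigenvalues_add_finrank_le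
    (V := LinearMap.ker ((fromCols A B)ᴴ.mulVecLin ∘ₗ LinearMap.funLeft ℂ ℂ Sum.inl))
    fun z hz => by
      rw [LinearMap.mem_ker, LinearMap.comp_apply, mulVecLin_apply,
        conjTranspose_fromCols_eq_fromRows_conjTranspose, fromRows_mulVec] at hz
      have hAx : Aᴴ *ᵥ (z ∘ Sum.inl) = 0 := funext fun i => congrFun hz (Sum.inl i)
      have hBx : Bᴴ *ᵥ (z ∘ Sum.inl) = 0 := funext fun i => congrFun hz (Sum.inr i)
      rw [← Sum.elim_comp_inl_inr z, star_sumElim_dotProduct_fromBlocks_mulVec,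
        star_dotProduct_mulVec_eq_star_conjTranspose_mulVec A, hAx, hBx]
      simp
  have hker := finrank_ker_mulVecLin_comp_funLeft_add_rank (fromCols A B)ᴴ
    (Sum.inl_injective (β := β))
  rw [rank_conjTranspose] at hker
  omega

lemma card_neg_eigenvalues_fromBlocks_le [DecidableEq α] [DecidableEq β] {A : Matrix α α ℂ}
    (hA : A.PosSemidef) (B : Matrix α β ℂ) (hM : (fromBlocks A B Bᴴ 0).IsHermitian) :
    Fintype.card {i // hM.eigenvalues i < 0} ≤ B.rank := by
  have hV := hM.card_neg_eigenvalues_add_finrank_le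
    (V := LinearMap.ker (B.mulVecLin ∘ₗ LinearMap.funLeft ℂ ℂ Sum.inr)) fun z hz => by
      change B *ᵥ (z ∘ Sum.inr) = 0 at hz
      rw [← Sum.elim_comp_inl_inr z, star_sumElim_dotProduct_fromBlocks_mulVec,
        ← star_dotProduct_mulVec_eq_star_conjTranspose_mulVec B,
        star_dotProduct_mulVec_eq_star_conjTranspose_mulVec Bᴴ, conjTranspose_conjTranspose, hz]
      simpa using hA.dotProduct_mulVec_nonneg (z ∘ Sum.inl)
  have hker := finrank_ker_mulVecLin_comp_funLeft_add_rank B (Sum.inr_injective (α := α))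
  omega

lemma ker_fromBlocks_mulVecLin_le {A : Matrix α α ℂ} (hA : A.PosSemidef) (B : Matrix α β ℂ) :
    LinearMap.ker (fromBlocks A B Bᴴ 0).mulVecLin ≤
      LinearMap.ker ((fromCols A B)ᴴ.mulVecLin ∘ₗ LinearMap.funLeft ℂ ℂ Sum.inl) ⊓
        LinearMap.ker (B.mulVecLin ∘ₗ LinearMap.funLeft ℂ ℂ Sum.inr) := by
  intro z hz
  set x := z ∘ Sum.inl
  set y := z ∘ Sum.inr
  rw [LinearMap.mem_ker, mulVecLin_apply, fromBlocks_mulVec] at hz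
  have hAB : A *ᵥ x + B *ᵥ y = 0 := funext fun i => congrFun hz (Sum.inl i)
  have hBx : Bᴴ *ᵥ x = 0 := funext fun i => by simpa using congrFun hz (Sum.inr i)
  have hAx : A *ᵥ x = 0 := by
    rw [← hA.dotProduct_mulVec_zero_iff]
    simpa [dotProduct_add, star_dotProduct_mulVec_eq_star_conjTranspose_mulVec B, hBx] using
      congrArg (star x ⬝ᵥ ·) hAB
  have hBy : B *ᵥ y = 0 := by simpa [hAx] using hAB
  refine ⟨?_, hBy⟩
  change (fromCols A B)ᴴ *ᵥ x = 0
  rw [conjTranspose_fromCols_eq_fromRows_conjTranspose, fromRows_mulVec, hA.1.eq, hAx, hBx]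
  exact Sum.elim_zero_zero

lemma rank_fromCols_add_rank_le_rank_fromBlocks {A : Matrix α α ℂ} (hA : A.PosSemidef)
    (B : Matrix α β ℂ) : (fromCols A B).rank + B.rank ≤ (fromBlocks A B Bᴴ 0).rank := by
  have h₁ := finrank_ker_mulVecLin_comp_funLeft_add_rank (fromCols A B)ᴴ
    (Sum.inl_injective (β := β))
  have h₂ := finrank_ker_mulVecLin_comp_funLeft_add_rank B (Sum.inr_injective (α := α))
  have hker := Submodule.finrank_mono (ker_fromBlocks_mulVecLin_le hA B)
  set V₁ := LinearMap.ker ((fromCols A B)ᴴ.mulVecLin ∘ₗ LinearMap.funLeft ℂ ℂ Sum.inl)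
  set V₂ := LinearMap.ker (B.mulVecLin ∘ₗ LinearMap.funLeft ℂ ℂ Sum.inr)
  have hsup : V₁ ⊔ V₂ = ⊤ := by
    refine eq_top_iff.mpr fun z _ => Submodule.mem_sup.mpr
      ⟨Sum.elim 0 (z ∘ Sum.inr), by simp [V₁, LinearMap.funLeft],
        Sum.elim (z ∘ Sum.inl) 0, by simp [V₂, LinearMap.funLeft], ?_⟩
    ext (i | i) <;> simp
  have h₁₂ := Submodule.finrank_sup_add_finrank_inf_eq V₁ V₂
  have hM := LinearMap.finrank_range_add_finrank_ker (fromBlocks A B Bᴴ 0).mulVecLin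
  rw [hsup, finrank_top, finrank_fintype_fun_eq_card] at h₁₂
  rw [finrank_fintype_fun_eq_card] at hM
  rw [rank_conjTranspose] at h₁
  change (fromBlocks A B Bᴴ 0).rank + _ = _ at hM
  omega

end Bordered

end Matrix

theorem inertia_bordered_psd {m n : ℕ} (A : Matrix (Fin m) (Fin m) ℂ)
    (B : Matrix (Fin m) (Fin n) ℂ) (hA : A.PosSemidef) :
    iPos (Matrix.fromBlocks A B Bᴴ 0) = (Matrix.fromCols A B).rank ∧
    iNeg (Matrix.fromBlocks A B Bᴴ 0) = B.rank ∧
    (Matrix.fromBlocks A B Bᴴ 0).rank = (Matrix.fromCols A B).rank + B.rank := by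
  have hM : (fromBlocks A B Bᴴ 0).IsHermitian := hA.1.fromBlocks rfl isHermitian_zero
  have hpos := card_pos_eigenvalues_fromBlocks_le A B hM
  have hneg := card_neg_eigenvalues_fromBlocks_le hA B hM
  have hrank := rank_fromCols_add_rank_le_rank_fromBlocks hA B
  have hsplit := hM.rank_eq_card_pos_add_card_neg
  simp only [iPos, iNeg, dif_pos hM, Nat.card_eq_fintype_card]
  omega
end

section
/- The block matrix [[A, B],[B*, D]] with Hermitian blocks A, D is positive semidefinite if and only if A is positive semidefinite, the column space of B is contained in the column space of A, and D − B*A†B is positive semidefinite. -/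
open Matrix
open scoped ComplexOrder

/-!
Once `A A† B = B`, i.e. the columns of `B` lie in the column space of `A`, the unipotent matrix
`[[1, A†B], [0, 1]]` is a congruence from `diag(A, D - B*A†B)` to `[[A, B], [B*, D]]`, so the
block matrix is positive semidefinite iff both diagonal blocks are. Conversely, if the block
matrix `M` is positive semidefinite and `A x = 0`, then the quadratic form of `M` vanishes at
`(x, 0)`, hence `M (x, 0) = (0, B* x) = 0`; so `ker A ⊆ ker B*`, which forces the range inclusion.
-/

namespace IsMoorePenrose

variable {m n p : Type*} [Fintype m] [Fintype n] {A : Matrix m n ℂ} {X Y : Matrix n m ℂ}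

theorem unique (hX : IsMoorePenrose A X) (hY : IsMoorePenrose A Y) : X = Y := by
  obtain ⟨hX1, hX2, hX3, hX4⟩ := hX
  obtain ⟨hY1, hY2, hY3, hY4⟩ := hY
  have hAX : A * X = A * Y :=
    calc A * X = (A * Y * A * X)ᴴ := by rw [hY1, hX3]
    _ = (A * X)ᴴ * (A * Y)ᴴ := by rw [Matrix.mul_assoc (A * Y), conjTranspose_mul]
    _ = A * Y := by rw [hX3, hY3, ← Matrix.mul_assoc, hX1]
  have hXA : X * A = Y * A :=
    calc X * A = (X * (A * Y * A))ᴴ := by rw [hY1, hX4]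
    _ = (Y * A)ᴴ * (X * A)ᴴ := by
      rw [Matrix.mul_assoc A, ← Matrix.mul_assoc X, conjTranspose_mul]
    _ = Y * A := by rw [hX4, hY4, Matrix.mul_assoc Y, ← Matrix.mul_assoc A, hX1]
  calc X = X * A * X := hX2.symm
  _ = Y * A * Y := by rw [Matrix.mul_assoc, hAX, ← Matrix.mul_assoc, hXA]
  _ = Y := hY2

theorem conjTranspose (hX : IsMoorePenrose A X) : IsMoorePenrose Aᴴ Xᴴ := by
  obtain ⟨h1, h2, h3, h4⟩ := hX
  refine ⟨?_, ?_, ?_, ?_⟩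
  · rw [← conjTranspose_mul, ← conjTranspose_mul, ← Matrix.mul_assoc, h1]
  · rw [← conjTranspose_mul, ← conjTranspose_mul, ← Matrix.mul_assoc, h2]
  · rw [← conjTranspose_mul, h4, h4]
  · rw [← conjTranspose_mul, h3, h3]

theorem map {k F : Type*} [Fintype k] [FunLike F (Matrix k k ℂ) (Matrix k k ℂ)]
    [MulHomClass F (Matrix k k ℂ) (Matrix k k ℂ)] [StarHomClass F (Matrix k k ℂ) (Matrix k k ℂ)]
    (f : F) {A X : Matrix k k ℂ} (hX : IsMoorePenrose A X) : IsMoorePenrose (f A) (f X) := by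
  obtain ⟨h1, h2, h3, h4⟩ := hX
  simp only [IsMoorePenrose, ← star_eq_conjTranspose, ← map_mul, ← map_star] at *
  rw [h1, h2, h3, h4]
  exact ⟨rfl, rfl, rfl, rfl⟩

/-- On the diagonal, Lean's convention `0⁻¹ = 0` is exactly the pseudo-inverse. -/
theorem diagonal {k : Type*} [Fintype k] [DecidableEq k] (c : k → ℂ) :
    IsMoorePenrose (diagonal c) (diagonal c⁻¹) := by
  refine ⟨?_, ?_, ?_, ?_⟩ <;>
    simp only [diagonal_mul_diagonal, diagonal_conjTranspose, diagonal_eq_diagonal_iff] <;>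
    intro i <;> by_cases hc : c i = 0 <;> simp [hc]

theorem mul_mul_eq_iff_range_le [Fintype p] (hX : IsMoorePenrose A X) (B : Matrix m p ℂ) :
    A * X * B = B ↔ LinearMap.range B.mulVecLin ≤ LinearMap.range A.mulVecLin := by
  classical
  refine ⟨fun h => ?_, fun h => ?_⟩
  · rintro _ ⟨v, rfl⟩
    exact ⟨(X * B) *ᵥ v, by simp [mulVec_mulVec, ← Matrix.mul_assoc, h]⟩
  · refine ext_of_mulVec_single fun j => ?_
    obtain ⟨w, hw⟩ := h ⟨Pi.single j 1, rfl⟩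
    simp only [mulVecLin_apply] at hw
    rw [← mulVec_mulVec, ← hw, mulVec_mulVec, hX.1]

theorem mul_mul_eq_of_ker_le (hX : IsMoorePenrose A X) (B : Matrix m p ℂ)
    (h : LinearMap.ker Aᴴ.mulVecLin ≤ LinearMap.ker Bᴴ.mulVecLin) : A * X * B = B := by
  classical
  have hAAX : Aᴴ * (A * X) = Aᴴ := by
    rw [← hX.2.2.1, ← conjTranspose_mul, hX.1]
  have hBAX : Bᴴ * (A * X) = Bᴴ := by
    refine ext_of_mulVec_single fun j => ?_
    have hker : Pi.single j 1 - (A * X) *ᵥ Pi.single j 1 ∈ LinearMap.ker Aᴴ.mulVecLin := by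
      rw [LinearMap.mem_ker, mulVecLin_apply, mulVec_sub, mulVec_mulVec, hAAX, sub_self]
    have := h hker
    simp only [LinearMap.mem_ker, mulVecLin_apply, mulVec_sub, mulVec_mulVec, sub_eq_zero] at this
    exact this.symm
  simpa [Matrix.mul_assoc, hX.2.2.1] using congr_arg (·ᴴ) hBAX

end IsMoorePenrose

namespace Matrix.IsHermitian

variable {k : Type*} [Fintype k] {A : Matrix k k ℂ}

theorem exists_isMoorePenrose [DecidableEq k] (hA : A.IsHermitian) : ∃ X, IsMoorePenrose A X := by
  rw [hA.spectral_theorem]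
  exact ⟨_, (IsMoorePenrose.diagonal _).map _⟩

theorem isMoorePenrose_pinv (hA : A.IsHermitian) : IsMoorePenrose A (pinv A) := by
  classical
  have h := hA.exists_isMoorePenrose
  rw [pinv, dif_pos h]
  exact h.choose_spec

theorem pinv (hA : A.IsHermitian) : (_root_.pinv A).IsHermitian := by
  have h := hA.isMoorePenrose_pinv.conjTranspose
  rw [hA.eq] at h
  exact h.unique hA.isMoorePenrose_pinv

end Matrix.IsHermitian

section Block

variable {R m n : Type*} [CommRing R] [StarRing R] [Fintype m] [Fintype n]
  {A X : Matrix m m R} {B : Matrix m n R} {D : Matrix n n R}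

theorem posSemidef_fromBlocks_zero_iff [PartialOrder R] [IsOrderedAddMonoid R] :
    (fromBlocks A 0 0 D).PosSemidef ↔ A.PosSemidef ∧ D.PosSemidef := by
  refine ⟨fun h => ⟨h.submatrix Sum.inl, h.submatrix Sum.inr⟩, fun ⟨hA, hD⟩ => ?_⟩
  refine .of_dotProduct_mulVec_nonneg (hA.1.fromBlocks conjTranspose_zero hD.1) fun x => ?_
  rw [← Sum.elim_comp_inl_inr x, fromBlocks_mulVec, Function.star_sumElim,
    sumElim_dotProduct_sumElim]
  simpa only [Sum.elim_comp_inl, Sum.elim_comp_inr, zero_mulVec, add_zero, zero_add] using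
    add_nonneg (hA.dotProduct_mulVec_nonneg _) (hD.dotProduct_mulVec_nonneg _)

variable [DecidableEq m] [DecidableEq n]

theorem fromBlocks_eq_conjTranspose_mul_fromBlocks_zero_mul (hA : A.IsHermitian)
    (hX : X.IsHermitian) (hB : A * X * B = B) :
    fromBlocks A B Bᴴ D = (fromBlocks 1 (X * B) 0 1)ᴴ * fromBlocks A 0 0 (D - Bᴴ * X * B) *
      fromBlocks 1 (X * B) 0 1 := by
  have hB' : Bᴴ * X * A = Bᴴ := by
    simpa [Matrix.mul_assoc, hA.eq, hX.eq] using congr_arg (·ᴴ) hB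
  simp only [fromBlocks_conjTranspose, fromBlocks_multiply, conjTranspose_one, conjTranspose_zero,
    conjTranspose_mul, hX.eq, Matrix.one_mul, Matrix.mul_one, Matrix.zero_mul, Matrix.mul_zero,
    add_zero, zero_add, ← Matrix.mul_assoc, hB, hB']
  simp [Matrix.mul_assoc]

theorem posSemidef_fromBlocks_iff_of_mul_mul_eq [PartialOrder R] [IsOrderedAddMonoid R]
    (hA : A.IsHermitian) (hX : X.IsHermitian) (hB : A * X * B = B) :
    (fromBlocks A B Bᴴ D).PosSemidef ↔ A.PosSemidef ∧ (D - Bᴴ * X * B).PosSemidef := by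
  have hU : IsUnit (fromBlocks 1 (X * B) 0 1 : Matrix (m ⊕ n) (m ⊕ n) R) :=
    isUnit_fromBlocks_zero₂₁.2 ⟨isUnit_one, isUnit_one⟩
  rw [fromBlocks_eq_conjTranspose_mul_fromBlocks_zero_mul hA hX hB, ← star_eq_conjTranspose,
    hU.posSemidef_star_left_conjugate_iff, posSemidef_fromBlocks_zero_iff]

end Block

theorem Matrix.PosSemidef.ker_le_ker_conjTranspose_of_fromBlocks {𝕜 m n : Type*} [RCLike 𝕜]
    [Fintype m] [Fintype n] {A : Matrix m m 𝕜} {B : Matrix m n 𝕜} {D : Matrix n n 𝕜}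
    (h : (fromBlocks A B Bᴴ D).PosSemidef) :
    LinearMap.ker A.mulVecLin ≤ LinearMap.ker Bᴴ.mulVecLin := by
  intro x hx
  rw [LinearMap.mem_ker, mulVecLin_apply] at hx ⊢
  have hzero := (h.dotProduct_mulVec_zero_iff (Sum.elim x 0)).1 (by
    simp [fromBlocks_mulVec, Function.star_sumElim, hx])
  simpa [fromBlocks_mulVec, hx] using congr_arg (· ∘ Sum.inr) hzero

theorem block_posSemidef_iff_general {m n : ℕ} (A : Matrix (Fin m) (Fin m) ℂ)
    (B : Matrix (Fin m) (Fin n) ℂ) (D : Matrix (Fin n) (Fin n) ℂ) :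
    (Matrix.fromBlocks A B Bᴴ D).PosSemidef ↔
      A.PosSemidef ∧
      LinearMap.range B.mulVecLin ≤ LinearMap.range A.mulVecLin ∧
      (D - Bᴴ * pinv A * B).PosSemidef := by
  have schur (hA : A.IsHermitian) (hB : A * pinv A * B = B) :=
    posSemidef_fromBlocks_iff_of_mul_mul_eq (D := D) hA hA.pinv hB
  constructor
  · intro hM
    have hA : A.IsHermitian := (hM.submatrix Sum.inl).isHermitian
    have hB : A * pinv A * B = B := hA.isMoorePenrose_pinv.mul_mul_eq_of_ker_le B <| by
      rw [hA.eq]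
      exact hM.ker_le_ker_conjTranspose_of_fromBlocks
    obtain ⟨hApsd, hS⟩ := (schur hA hB).1 hM
    exact ⟨hApsd, (hA.isMoorePenrose_pinv.mul_mul_eq_iff_range_le B).1 hB, hS⟩
  · rintro ⟨hApsd, hrange, hS⟩
    have hA := hApsd.isHermitian
    exact (schur hA ((hA.isMoorePenrose_pinv.mul_mul_eq_iff_range_le B).2 hrange)).2 ⟨hApsd, hS⟩

theorem block_posSemidef_iff {m n : ℕ} (A : Matrix (Fin m) (Fin m) ℂ)
    (B : Matrix (Fin m) (Fin n) ℂ) (D : Matrix (Fin n) (Fin n) ℂ)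
    (hA : A.IsHermitian) (hD : D.IsHermitian) :
    (Matrix.fromBlocks A B Bᴴ D).PosSemidef ↔
      A.PosSemidef ∧
      LinearMap.range B.mulVecLin ≤ LinearMap.range A.mulVecLin ∧
      (D - Bᴴ * pinv A * B).PosSemidef :=
  block_posSemidef_iff_general A B D
end

section
/- Let A ∈ ℂ^{m×m} be Hermitian positive semidefinite and B ∈ ℂ^{m×n}. There exists a Hermitian X ∈ ℂ^{n×n} with BXB* ⪰ A if and only if the column space of A is contained in the column space of B; and in this case X = B†A(B†)* + UU* is such a solution for every U ∈ ℂ^{n×n}. -/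
open Matrix
open scoped ComplexOrder

/-!
If `B X Bᴴ - A ⪰ 0` and `Bᴴ x = 0`, then `-xᴴ A x ≥ 0`, so `A x = 0` since `A ⪰ 0`. Hence `A`
vanishes on `ker Bᴴ`, the orthogonal complement of the range of `B`, which is the range of the
Hermitian idempotent `1 - B B†`; so `B B† A = A` and the range of `A` lies in that of `B`.
Conversely, `B B† A = A` gives `B (B† A B†ᴴ + U Uᴴ) Bᴴ - A = (B U)(B U)ᴴ ⪰ 0`.

The Moore–Penrose inverse exists: for Hermitian `H` it is `x ↦ x⁻¹` of the functional calculus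
(`0⁻¹ = 0` in `ℝ`), and `B† = (Bᴴ B)† Bᴴ`.
-/

namespace Matrix

variable {𝕜 : Type*} [RCLike 𝕜] {m n : Type*} [Fintype m] [Fintype n]

theorem range_mulVecLin_le_iff_mul_mul_eq {R : Type*} [CommSemiring R] {k : Type*} [Fintype k]
    {A : Matrix m k R} {B : Matrix m n R} {G : Matrix n m R} (hG : B * G * B = B) :
    LinearMap.range A.mulVecLin ≤ LinearMap.range B.mulVecLin ↔ B * G * A = A := by
  refine ⟨fun hAB => ext_iff_mulVec.mpr fun v => ?_, fun hA => ?_⟩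
  · obtain ⟨w, hw⟩ := hAB (LinearMap.mem_range_self A.mulVecLin v)
    change B *ᵥ w = A *ᵥ v at hw
    rw [← mulVec_mulVec, ← hw, mulVec_mulVec, hG]
  · rw [← hA, Matrix.mul_assoc, mulVecLin_mul]
    exact LinearMap.range_comp_le_range _ _

theorem PosSemidef.mulVec_eq_zero_of_sub_posSemidef {A M : Matrix n n 𝕜} (hA : A.PosSemidef)
    (hMA : (M - A).PosSemidef) {x : n → 𝕜} (hx : M *ᵥ x = 0) : A *ᵥ x = 0 := by
  refine (hA.dotProduct_mulVec_zero_iff x).mp (le_antisymm ?_ (hA.dotProduct_mulVec_nonneg x))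
  simpa [sub_mulVec, hx] using hMA.dotProduct_mulVec_nonneg x

theorem mul_mul_eq_of_sub_posSemidef {A : Matrix m m 𝕜} {B : Matrix m n 𝕜} {X : Matrix n n 𝕜}
    {G : Matrix n m 𝕜} (hA : A.PosSemidef) (hBXB : (B * X * Bᴴ - A).PosSemidef)
    (hBGB : B * G * B = B) (hBG : (B * G)ᴴ = B * G) : B * G * A = A := by
  classical
  have hker : Bᴴ * (1 - B * G) = 0 := by
    rw [Matrix.mul_sub, Matrix.mul_one, ← hBG, ← conjTranspose_mul, hBGB, sub_self]
  have hAQ : A * (1 - B * G) = 0 := by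
    refine ext_iff_mulVec.mpr fun v => ?_
    rw [← mulVec_mulVec, zero_mulVec]
    refine hA.mulVec_eq_zero_of_sub_posSemidef hBXB ?_
    rw [mulVec_mulVec, Matrix.mul_assoc, Matrix.mul_assoc, hker, Matrix.mul_zero,
      Matrix.mul_zero, zero_mulVec]
  have hQA := congrArg conjTranspose hAQ
  rw [conjTranspose_mul, conjTranspose_sub, conjTranspose_one, hBG, hA.isHermitian.eq,
    conjTranspose_zero, Matrix.sub_mul, Matrix.one_mul, sub_eq_zero] at hQA
  exact hQA.symm

theorem mul_mul_conjTranspose_eq_of_mul_mul_eq {A : Matrix m m 𝕜} {B : Matrix m n 𝕜}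
    {G : Matrix n m 𝕜} (hA : A.IsHermitian) (hBGA : B * G * A = A) :
    B * (G * A * Gᴴ) * Bᴴ = A := by
  calc B * (G * A * Gᴴ) * Bᴴ = B * G * A * (B * G)ᴴ := by
        simp only [conjTranspose_mul, Matrix.mul_assoc]
    _ = (B * G * A)ᴴ := by rw [conjTranspose_mul (B * G) A, hA.eq, hBGA]
    _ = A := by rw [hBGA, hA.eq]

theorem mul_add_mul_conjTranspose_sub_eq {k : Type*} [Fintype k] {A : Matrix m m 𝕜}
    {B : Matrix m n 𝕜} {G : Matrix n m 𝕜} (hA : A.IsHermitian) (hBGA : B * G * A = A)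
    (U : Matrix n k 𝕜) :
    B * (G * A * Gᴴ + U * Uᴴ) * Bᴴ - A = B * U * (B * U)ᴴ := by
  rw [Matrix.mul_add, Matrix.add_mul, mul_mul_conjTranspose_eq_of_mul_mul_eq hA hBGA,
    add_sub_cancel_left, conjTranspose_mul]
  simp only [Matrix.mul_assoc]

theorem IsHermitian.exists_isMoorePenrose_s14 [DecidableEq n] {H : Matrix n n ℂ}
    (hH : H.IsHermitian) : ∃ G, IsMoorePenrose H G ∧ G.IsHermitian ∧ Commute H G := by
  have hmul (f g : ℝ → ℝ) : cfc f H * cfc g H = cfc (fun x => f x * g x) H :=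
    (cfc_mul f g H (H.finite_real_spectrum.continuousOn f)
      (H.finite_real_spectrum.continuousOn g)).symm
  set G := cfc (·⁻¹ : ℝ → ℝ) H
  have hG : G.IsHermitian := cfc_predicate _ H
  have hHG : Commute H G := by
    simpa only [cfc_id' ℝ H] using cfc_commute_cfc (fun x : ℝ => x) (·⁻¹) H
  refine ⟨G, ⟨?_, ?_, ?_, ?_⟩, hG, hHG⟩
  · calc H * G * H = cfc (fun x : ℝ => x) H * G * cfc (fun x : ℝ => x) H := by rw [cfc_id' ℝ H]
      _ = cfc (fun x : ℝ => x * x⁻¹ * x) H := by rw [hmul, hmul]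
      _ = cfc (fun x : ℝ => x) H := cfc_congr fun x _ => mul_inv_mul_cancel x
      _ = H := cfc_id' ℝ H
  · calc G * H * G = G * cfc (fun x : ℝ => x) H * G := by rw [cfc_id' ℝ H]
      _ = cfc (fun x : ℝ => x⁻¹ * x * x⁻¹) H := by rw [hmul, hmul]
      _ = G := cfc_congr fun x _ => by simpa using mul_inv_mul_cancel x⁻¹
  · rw [conjTranspose_mul, hG.eq, hH.eq, hHG.eq]
  · rw [conjTranspose_mul, hG.eq, hH.eq, hHG.eq]

theorem exists_isMoorePenrose_s14 (B : Matrix m n ℂ) : ∃ X, IsMoorePenrose B X := by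
  classical
  obtain ⟨K, ⟨hHKH, hKHK, -, -⟩, hK, hHK⟩ :=
    (isHermitian_conjTranspose_mul_self B).exists_isMoorePenrose_s14
  have hBKH : B * (K * (Bᴴ * B)) = B := by
    have h : Bᴴ * B * (K * (Bᴴ * B) - 1) = 0 := by
      rw [Matrix.mul_sub, ← Matrix.mul_assoc, hHKH, Matrix.mul_one, sub_self]
    rwa [conjTranspose_mul_self_mul_eq_zero, Matrix.mul_sub, Matrix.mul_one, sub_eq_zero] at h
  refine ⟨K * Bᴴ, ?_, ?_, ?_, ?_⟩
  · simpa only [Matrix.mul_assoc] using hBKH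
  · calc K * Bᴴ * B * (K * Bᴴ) = K * (Bᴴ * B) * K * Bᴴ := by simp only [Matrix.mul_assoc]
      _ = K * Bᴴ := by rw [hKHK]
  · simp only [conjTranspose_mul, conjTranspose_conjTranspose, hK.eq, Matrix.mul_assoc]
  · rw [Matrix.mul_assoc, conjTranspose_mul, hK.eq, (isHermitian_conjTranspose_mul_self B).eq,
      hHK.eq]

theorem isMoorePenrose_pinv (B : Matrix m n ℂ) : IsMoorePenrose B (pinv B) := by
  rw [pinv, dif_pos (exists_isMoorePenrose_s14 B)]
  exact (exists_isMoorePenrose_s14 B).choose_spec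

end Matrix

theorem lmi_solvability_psd {m n : ℕ} (A : Matrix (Fin m) (Fin m) ℂ)
    (B : Matrix (Fin m) (Fin n) ℂ) (hA : A.PosSemidef) :
    ((∃ X : Matrix (Fin n) (Fin n) ℂ, X.IsHermitian ∧ (B * X * Bᴴ - A).PosSemidef) ↔
      LinearMap.range A.mulVecLin ≤ LinearMap.range B.mulVecLin) ∧
    (LinearMap.range A.mulVecLin ≤ LinearMap.range B.mulVecLin →
      ∀ U : Matrix (Fin n) (Fin n) ℂ,
        (pinv B * A * (pinv B)ᴴ + U * Uᴴ).IsHermitian ∧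
        (B * (pinv B * A * (pinv B)ᴴ + U * Uᴴ) * Bᴴ - A).PosSemidef) := by
  obtain ⟨hBGB, -, hBG, -⟩ := isMoorePenrose_pinv B
  have hrange := range_mulVecLin_le_iff_mul_mul_eq (A := A) hBGB
  have hsolution : LinearMap.range A.mulVecLin ≤ LinearMap.range B.mulVecLin →
      ∀ U : Matrix (Fin n) (Fin n) ℂ,
        (pinv B * A * (pinv B)ᴴ + U * Uᴴ).IsHermitian ∧
        (B * (pinv B * A * (pinv B)ᴴ + U * Uᴴ) * Bᴴ - A).PosSemidef := fun hAB U =>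
    ⟨(isHermitian_mul_mul_conjTranspose _ hA.isHermitian).add
        (isHermitian_mul_conjTranspose_self U),
      mul_add_mul_conjTranspose_sub_eq hA.isHermitian (hrange.mp hAB) U ▸
        posSemidef_self_mul_conjTranspose _⟩
  refine ⟨⟨fun ⟨_, _, hBXB⟩ => ?_, fun hAB => ⟨_, hsolution hAB 0⟩⟩, hsolution⟩
  exact hrange.mpr (mul_mul_eq_of_sub_posSemidef hA hBXB hBGB hBG)
end

section
/- Let A ∈ ℂ^{m×m} be Hermitian positive semidefinite and B ∈ ℂ^{m×n}. There exists a Hermitian X ∈ ℂ^{n×n} with BXB* ≻ A (positive definite difference) if and only if rank(B) = m. -/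
open Matrix
open scoped ComplexOrder

/-!
If `BXB* - A` is positive definite then so is `BXB* = (BXB* - A) + A`; an invertible
`m × m` matrix factoring through `B` forces `B` to have rank `m`. Conversely, a matrix of
full row rank has a right inverse `C`, and `X = C (A + 1) C*` gives `BXB* - A = 1`.
-/

namespace Matrix

variable {m n R : Type*} [Fintype m] [Fintype n] [DecidableEq m]

theorem rank_eq_card_height_of_isUnit_mul [Field R] {B : Matrix m n R} {Y : Matrix n m R}
    (h : IsUnit (B * Y)) : B.rank = Fintype.card m :=
  B.rank_le_card_height.antisymm <| (rank_of_isUnit _ h).symm.le.trans (rank_mul_le_left _ _)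

theorem exists_mul_eq_one_of_rank_eq_card_height [Field R] {B : Matrix m n R}
    (h : B.rank = Fintype.card m) : ∃ C : Matrix n m R, B * C = 1 := by
  have hrange : LinearMap.range B.mulVecLin = ⊤ :=
    Submodule.eq_top_of_finrank_eq (by simpa [rank] using h)
  obtain ⟨g, hg⟩ := B.mulVecLin.exists_rightInverse_of_surjective hrange
  classical
  refine ⟨LinearMap.toMatrix' g, ?_⟩
  apply Matrix.toLin'.injective
  rw [Matrix.toLin'_mul, Matrix.toLin'_toMatrix', Matrix.toLin'_one]
  exact hg

theorem mul_mul_conjTranspose_eq_of_mul_eq_one [Semiring R] [StarRing R] {B : Matrix m n R}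
    {C : Matrix n m R} (h : B * C = 1) (S : Matrix m m R) : B * (C * S * Cᴴ) * Bᴴ = S := by
  calc B * (C * S * Cᴴ) * Bᴴ = B * C * S * (B * C)ᴴ := by
        simp only [conjTranspose_mul, Matrix.mul_assoc]
    _ = S := by simp [h]

end Matrix

theorem lmi_strict_solvability_psd {m n : ℕ} (A : Matrix (Fin m) (Fin m) ℂ)
    (B : Matrix (Fin m) (Fin n) ℂ) (hA : A.PosSemidef) :
    (∃ X : Matrix (Fin n) (Fin n) ℂ, X.IsHermitian ∧ (B * X * Bᴴ - A).PosDef) ↔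
      B.rank = m := by
  constructor
  · rintro ⟨X, -, hP⟩
    have hBXB : (B * X * Bᴴ).PosDef := by simpa using hP.add_posSemidef hA
    have hunit : IsUnit (B * (X * Bᴴ)) := by simpa only [Matrix.mul_assoc] using hBXB.isUnit
    exact (rank_eq_card_height_of_isUnit_mul hunit).trans (Fintype.card_fin m)
  · intro hB
    obtain ⟨C, hBC⟩ :=
      exists_mul_eq_one_of_rank_eq_card_height (hB.trans (Fintype.card_fin m).symm)
    refine ⟨C * (A + 1) * Cᴴ,
      isHermitian_mul_mul_conjTranspose C (hA.isHermitian.add isHermitian_one), ?_⟩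
    rw [mul_mul_conjTranspose_eq_of_mul_eq_one hBC, add_sub_cancel_left]
    exact PosDef.one
end

section
/- Let A ∈ ℂ^{m×m} be Hermitian, B ∈ ℂ^{m×n}, and suppose BXB* ⪰ A has a Hermitian solution. Then the minimum over all such Hermitian solutions X of the rank of BXB* − A equals rank([A, B]) − rank(B), and the maximum of the rank of BXB* − A equals rank([A, B]). -/
/-!
Write `D = B X Bᴴ - A`. Since `D + A` has its columns in `col B`, the column spaces satisfy
`col D ⊔ col B = col A ⊔ col B = col [A, B]`, which gives
`rank [A, B] - rank B ≤ rank D ≤ rank [A, B]` for every `X`.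

Both bounds are attained once one feasible `X₀` exists, with `D₀ = S Sᴴ ⪰ 0`. Replacing `X₀` by
`X₀ + 1` adds `B Bᴴ` to `D₀`, so that `col B ≤ col D`. For the minimum, let `Q` be the orthogonal
projection onto `V = {x | S x ∈ col B}`: then `S Q = B G` for some `G`, and
`D = D₀ - B (G Gᴴ) Bᴴ = S (1 - Q) Sᴴ` is positive semidefinite with `col D ⊓ col B = ⊥`, because
`S w ∈ col B` with `w ∈ Vᗮ` forces `w = 0`.
-/

open Matrix
open scoped ComplexOrder

open Module Submodule WithLp
open scoped MatrixOrder

namespace Matrix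

variable {𝕜 ι κ μ : Type*} [RCLike 𝕜] [Fintype κ] [Fintype μ] [DecidableEq κ] [DecidableEq μ]

noncomputable def colSpace (M : Matrix ι κ 𝕜) : Submodule 𝕜 (EuclideanSpace 𝕜 ι) :=
  LinearMap.range (toEuclideanLin M)

theorem rank_eq_finrank_colSpace [Finite ι] (M : Matrix ι κ 𝕜) :
    M.rank = finrank 𝕜 (colSpace M) :=
  rank_eq_finrank_range_toLin M (PiLp.basisFun 2 𝕜 ι) (PiLp.basisFun 2 𝕜 κ)

theorem colSpace_mul_le (M : Matrix ι κ 𝕜) (N : Matrix κ μ 𝕜) :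
    colSpace (M * N) ≤ colSpace M := by
  rw [colSpace, toLpLin_mul_same]
  exact LinearMap.range_comp_le_range _ _

theorem colSpace_add_le (M N : Matrix ι κ 𝕜) :
    colSpace (M + N) ≤ colSpace M ⊔ colSpace N := by
  rw [colSpace, map_add]
  exact LinearMap.range_add_le _ _

@[simp]
theorem colSpace_neg (M : Matrix ι κ 𝕜) : colSpace (-M) = colSpace M := by
  rw [colSpace, map_neg, LinearMap.range_neg, colSpace]

theorem colSpace_self_mul_conjTranspose [Fintype ι] [DecidableEq ι] (M : Matrix ι κ 𝕜) :
    colSpace (M * Mᴴ) = colSpace M :=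
  eq_of_le_of_finrank_le (colSpace_mul_le M Mᴴ) <| by
    rw [← rank_eq_finrank_colSpace, ← rank_eq_finrank_colSpace, rank_self_mul_conjTranspose]

theorem colSpace_fromCols (M : Matrix ι κ 𝕜) (N : Matrix ι μ 𝕜) :
    colSpace (fromCols M N) = colSpace M ⊔ colSpace N := by
  refine le_antisymm ?_ (sup_le ?_ ?_)
  · rintro _ ⟨x, rfl⟩
    have h : toEuclideanLin (fromCols M N) x = toEuclideanLin M (toLp 2 (ofLp x ∘ Sum.inl)) +
        toEuclideanLin N (toLp 2 (ofLp x ∘ Sum.inr)) := by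
      ext; simp [toLpLin_apply]
    rw [h]
    exact add_mem_sup (LinearMap.mem_range_self _ _) (LinearMap.mem_range_self _ _)
  · simpa [fromCols_mul_fromRows] using
      colSpace_mul_le (fromCols M N) (fromRows (1 : Matrix κ κ 𝕜) (0 : Matrix μ κ 𝕜))
  · simpa [fromCols_mul_fromRows] using
      colSpace_mul_le (fromCols M N) (fromRows (0 : Matrix κ μ 𝕜) (1 : Matrix μ μ 𝕜))

theorem exists_mul_eq_of_colSpace_le {M : Matrix ι μ 𝕜} {B : Matrix ι κ 𝕜}
    (h : colSpace M ≤ colSpace B) : ∃ G : Matrix κ μ 𝕜, B * G = M := by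
  obtain ⟨g, hg⟩ := Module.projective_lifting_property (toEuclideanLin B).rangeRestrict
    ((toEuclideanLin M).codRestrict _ fun x => h ⟨x, rfl⟩) (LinearMap.surjective_rangeRestrict _)
  refine ⟨toEuclideanLin.symm g, toEuclideanLin.injective ?_⟩
  rw [toLpLin_mul_same, LinearEquiv.apply_symm_apply]
  ext x : 1
  exact congrArg Subtype.val (LinearMap.congr_fun hg x)

theorem PosSemidef.exists_eq_mul_conjTranspose [Fintype ι] [DecidableEq ι] {P : Matrix ι ι 𝕜}
    (hP : P.PosSemidef) : ∃ S : Matrix ι ι 𝕜, P = S * Sᴴ := by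
  obtain ⟨S, hS⟩ := CStarAlgebra.nonneg_iff_eq_star_mul_self.mp hP.nonneg
  exact ⟨Sᴴ, by rw [hS, conjTranspose_conjTranspose, star_eq_conjTranspose]⟩

theorem PosSemidef.colSpace_add [Fintype ι] [DecidableEq ι] {P Q : Matrix ι ι 𝕜}
    (hP : P.PosSemidef) (hQ : Q.PosSemidef) : colSpace (P + Q) = colSpace P ⊔ colSpace Q := by
  obtain ⟨S, rfl⟩ := hP.exists_eq_mul_conjTranspose
  obtain ⟨T, rfl⟩ := hQ.exists_eq_mul_conjTranspose
  rw [← fromCols_mul_fromRows, ← conjTranspose_fromCols_eq_fromRows_conjTranspose,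
    colSpace_self_mul_conjTranspose, colSpace_fromCols, colSpace_self_mul_conjTranspose,
    colSpace_self_mul_conjTranspose]

theorem colSpace_mul_sub_le (A : Matrix ι μ 𝕜) (B : Matrix ι κ 𝕜) (Y : Matrix κ μ 𝕜) :
    colSpace (B * Y - A) ≤ colSpace A ⊔ colSpace B := by
  rw [sub_eq_add_neg, sup_comm]
  exact (colSpace_add_le _ _).trans (sup_le_sup (colSpace_mul_le B Y) (colSpace_neg A).le)

theorem colSpace_mul_sub_sup (A : Matrix ι μ 𝕜) (B : Matrix ι κ 𝕜) (Y : Matrix κ μ 𝕜) :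
    colSpace (B * Y - A) ⊔ colSpace B = colSpace A ⊔ colSpace B :=
  le_antisymm (sup_le (colSpace_mul_sub_le A B Y) le_sup_right) <| sup_le
    (by simpa using colSpace_mul_sub_le (B * Y - A) B Y) le_sup_right

theorem rank_fromCols_eq_finrank_colSpace_mul_sub_sup [Fintype ι] (A : Matrix ι μ 𝕜)
    (B : Matrix ι κ 𝕜) (Y : Matrix κ μ 𝕜) :
    (fromCols A B).rank = finrank 𝕜 ↥(colSpace (B * Y - A) ⊔ colSpace B) := by
  rw [rank_eq_finrank_colSpace, colSpace_fromCols, colSpace_mul_sub_sup]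

theorem exists_isStarProjection_toEuclideanLin_eq [Fintype ι] [DecidableEq ι]
    (V : Submodule 𝕜 (EuclideanSpace 𝕜 ι)) :
    ∃ Q : Matrix ι ι 𝕜, IsStarProjection Q ∧ ∀ x, toEuclideanLin Q x = V.starProjection x := by
  let e := (toEuclideanCLM (𝕜 := 𝕜) (n := ι)).symm
  refine ⟨e V.starProjection, ⟨V.isIdempotentElem_starProjection.map e, ?_⟩, fun x => ?_⟩
  · exact (e.map_star' _).symm.trans (congrArg e (isSelfAdjoint_starProjection V))
  · rw [← coe_toEuclideanCLM_eq_toEuclideanLin]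
    simp [e]

theorem PosSemidef.exists_disjoint_colSpace_sub_mul_mul_conjTranspose [Fintype ι] [DecidableEq ι]
    {D : Matrix ι ι 𝕜} (hD : D.PosSemidef) (B : Matrix ι κ 𝕜) :
    ∃ Y : Matrix κ κ 𝕜, Y.PosSemidef ∧ (D - B * Y * Bᴴ).PosSemidef ∧
      Disjoint (colSpace (D - B * Y * Bᴴ)) (colSpace B) := by
  obtain ⟨S, rfl⟩ := hD.exists_eq_mul_conjTranspose
  set V := (colSpace B).comap (toEuclideanLin S)
  obtain ⟨Q, hQ, hQ_apply⟩ := exists_isStarProjection_toEuclideanLin_eq V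
  have hSQ : colSpace (S * Q) ≤ colSpace B := by
    rintro _ ⟨x, rfl⟩
    rw [toLpLin_mul_same, LinearMap.comp_apply, hQ_apply]
    exact V.starProjection_apply_mem x
  obtain ⟨G, hG⟩ := exists_mul_eq_of_colSpace_le hSQ
  have hsplit : S * Sᴴ - B * (G * Gᴴ) * Bᴴ = S * (1 - Q) * Sᴴ := by
    have hQh : Qᴴ = Q := hQ.isSelfAdjoint
    calc S * Sᴴ - B * (G * Gᴴ) * Bᴴ = S * Sᴴ - (B * G) * (B * G)ᴴ := by
          simp only [conjTranspose_mul, Matrix.mul_assoc]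
      _ = S * Sᴴ - S * (Q * Q) * Sᴴ := by
          rw [hG, conjTranspose_mul, hQh]
          simp only [mul_assoc]
      _ = S * (1 - Q) * Sᴴ := by
          rw [hQ.isIdempotentElem.eq]; noncomm_ring
  refine ⟨G * Gᴴ, posSemidef_self_mul_conjTranspose G, ?_, ?_⟩ <;> rw [hsplit]
  · exact (nonneg_iff_posSemidef.mp hQ.one_sub.nonneg).mul_mul_conjTranspose_same S
  · rw [Submodule.disjoint_def]
    rintro _ ⟨x, rfl⟩ hx
    set w := toEuclideanLin (1 - Q) (toEuclideanLin Sᴴ x)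
    have hw_perp : w ∈ Vᗮ := by
      simp only [w, map_sub, toLpLin_one, LinearMap.sub_apply, LinearMap.id_apply, hQ_apply]
      exact V.sub_starProjection_mem_orthogonal _
    have hw : toEuclideanLin (S * (1 - Q) * Sᴴ) x = toEuclideanLin S w := by
      simp [w]
    rw [hw] at hx ⊢
    rw [Submodule.disjoint_def.mp V.orthogonal_disjoint w hx hw_perp, map_zero]

theorem rank_fromCols_le_rank_mul_sub_add_rank [Fintype ι] (A : Matrix ι μ 𝕜) (B : Matrix ι κ 𝕜)
    (Y : Matrix κ μ 𝕜) : (fromCols A B).rank ≤ (B * Y - A).rank + B.rank := by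
  rw [rank_fromCols_eq_finrank_colSpace_mul_sub_sup A B Y, rank_eq_finrank_colSpace,
    rank_eq_finrank_colSpace]
  exact finrank_add_le_finrank_add_finrank _ _

theorem rank_mul_sub_le_rank_fromCols [Fintype ι] (A : Matrix ι μ 𝕜) (B : Matrix ι κ 𝕜)
    (Y : Matrix κ μ 𝕜) : (B * Y - A).rank ≤ (fromCols A B).rank := by
  rw [rank_fromCols_eq_finrank_colSpace_mul_sub_sup A B Y, rank_eq_finrank_colSpace]
  exact finrank_mono le_sup_left

section Feasible

variable [Fintype ι] [DecidableEq ι] {A : Matrix ι ι 𝕜} {B : Matrix ι κ 𝕜} {X₀ : Matrix κ κ 𝕜}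

theorem exists_rank_mul_mul_sub_add_rank_eq_rank_fromCols (hX₀ : X₀.IsHermitian)
    (hD₀ : (B * X₀ * Bᴴ - A).PosSemidef) :
    ∃ X : Matrix κ κ 𝕜, X.IsHermitian ∧ (B * X * Bᴴ - A).PosSemidef ∧
      (B * X * Bᴴ - A).rank + B.rank = (fromCols A B).rank := by
  obtain ⟨Y, hY, hD, hdisj⟩ := hD₀.exists_disjoint_colSpace_sub_mul_mul_conjTranspose B
  have hX : B * (X₀ - Y) * Bᴴ - A = B * X₀ * Bᴴ - A - B * Y * Bᴴ := by
    rw [Matrix.mul_sub, Matrix.sub_mul]; abel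
  refine ⟨X₀ - Y, hX₀.sub hY.1, hX ▸ hD, ?_⟩
  rw [rank_fromCols_eq_finrank_colSpace_mul_sub_sup A B ((X₀ - Y) * Bᴴ), ← Matrix.mul_assoc, hX,
    rank_eq_finrank_colSpace, rank_eq_finrank_colSpace, ← finrank_sup_add_finrank_inf_eq,
    hdisj.eq_bot, finrank_bot, add_zero]

theorem exists_rank_mul_mul_sub_eq_rank_fromCols (hX₀ : X₀.IsHermitian)
    (hD₀ : (B * X₀ * Bᴴ - A).PosSemidef) :
    ∃ X : Matrix κ κ 𝕜, X.IsHermitian ∧ (B * X * Bᴴ - A).PosSemidef ∧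
      (B * X * Bᴴ - A).rank = (fromCols A B).rank := by
  have hX : B * (X₀ + 1) * Bᴴ - A = B * X₀ * Bᴴ - A + B * Bᴴ := by
    rw [Matrix.mul_add, Matrix.mul_one, Matrix.add_mul]; abel
  have hBB := posSemidef_self_mul_conjTranspose B
  refine ⟨X₀ + 1, hX₀.add isHermitian_one, hX ▸ hD₀.add hBB, ?_⟩
  rw [hX, rank_eq_finrank_colSpace, hD₀.colSpace_add hBB, colSpace_self_mul_conjTranspose,
    rank_fromCols_eq_finrank_colSpace_mul_sub_sup A B (X₀ * Bᴴ), Matrix.mul_assoc]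

end Feasible

end Matrix

theorem lmi_rank_extrema_general {m n : ℕ} (A : Matrix (Fin m) (Fin m) ℂ)
    (B : Matrix (Fin m) (Fin n) ℂ)
    (hcons : ∃ X : Matrix (Fin n) (Fin n) ℂ, X.IsHermitian ∧ (B * X * Bᴴ - A).PosSemidef) :
    IsLeast {r : ℕ | ∃ X : Matrix (Fin n) (Fin n) ℂ, X.IsHermitian ∧
        (B * X * Bᴴ - A).PosSemidef ∧ r = (B * X * Bᴴ - A).rank}
      ((Matrix.fromCols A B).rank - B.rank) ∧
    IsGreatest {r : ℕ | ∃ X : Matrix (Fin n) (Fin n) ℂ, X.IsHermitian ∧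
        (B * X * Bᴴ - A).PosSemidef ∧ r = (B * X * Bᴴ - A).rank}
      ((Matrix.fromCols A B).rank) := by
  obtain ⟨X₀, hX₀, hD₀⟩ := hcons
  obtain ⟨Xmin, hXmin, hDmin, hmin⟩ := exists_rank_mul_mul_sub_add_rank_eq_rank_fromCols hX₀ hD₀
  obtain ⟨Xmax, hXmax, hDmax, hmax⟩ := exists_rank_mul_mul_sub_eq_rank_fromCols hX₀ hD₀
  refine ⟨⟨⟨Xmin, hXmin, hDmin, by omega⟩, ?_⟩, ⟨Xmax, hXmax, hDmax, hmax.symm⟩, ?_⟩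
  · rintro _ ⟨X, -, -, rfl⟩
    have := rank_fromCols_le_rank_mul_sub_add_rank A B (X * Bᴴ)
    rw [← Matrix.mul_assoc] at this
    omega
  · rintro _ ⟨X, -, -, rfl⟩
    simpa only [Matrix.mul_assoc] using rank_mul_sub_le_rank_fromCols A B (X * Bᴴ)

theorem lmi_rank_extrema {m n : ℕ} (A : Matrix (Fin m) (Fin m) ℂ)
    (B : Matrix (Fin m) (Fin n) ℂ) (hA : A.IsHermitian)
    (hcons : ∃ X : Matrix (Fin n) (Fin n) ℂ, X.IsHermitian ∧ (B * X * Bᴴ - A).PosSemidef) :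
    IsLeast {r : ℕ | ∃ X : Matrix (Fin n) (Fin n) ℂ, X.IsHermitian ∧
        (B * X * Bᴴ - A).PosSemidef ∧ r = (B * X * Bᴴ - A).rank}
      ((Matrix.fromCols A B).rank - B.rank) ∧
    IsGreatest {r : ℕ | ∃ X : Matrix (Fin n) (Fin n) ℂ, X.IsHermitian ∧
        (B * X * Bᴴ - A).PosSemidef ∧ r = (B * X * Bᴴ - A).rank}
      ((Matrix.fromCols A B).rank) :=
  lmi_rank_extrema_general A B hcons
end

section
/- Let A ∈ ℂ^{m×m} be Hermitian, B ∈ ℂ^{m×n}, and suppose BXB* ⪰ A has a Hermitian solution. Then the minimum of rank(X) over all Hermitian solutions X equals i₊(A), the number of positive eigenvalues of A; moreover there always exists a positive definite Hermitian solution X ≻ 0. -/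
open Matrix
open scoped ComplexOrder

/-!
If `A ≤ B X Bᴴ`, then `B X Bᴴ` is positive definite on the positive eigenspace of `A`, so
`i₊(A) ≤ rank (B X Bᴴ) ≤ rank X`.

Conversely, let `X₀` be feasible, `N = B X₀ Bᴴ` and `M = N - A ≥ 0`. Block elimination of the
coupling between `range B` and a complement, which is possible because `M ≥ 0` (a generalized
Schur complement), gives `G = B K` with `G N = N` and `G M (1 - G)ᴴ = 0`; then
`G A Gᴴ - A = (1 - G) M (1 - G)ᴴ ≥ 0`. Hence `X = K A⁺ Kᴴ` satisfies
`B X Bᴴ = G A⁺ Gᴴ ≥ G A Gᴴ ≥ A` and `rank X ≤ rank A⁺ = i₊(A)`.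

A positive definite solution is `X₀⁺ + 1`.
-/

open scoped MatrixOrder

namespace Matrix

section CommSemiring

variable {R : Type*} [CommSemiring R] {k l m n : Type*} [Fintype k] [Fintype l]

theorem exists_mul_eq_of_range_le {T : Matrix m k R} {X : Matrix m l R}
    (h : LinearMap.range X.mulVecLin ≤ LinearMap.range T.mulVecLin) :
    ∃ W : Matrix k l R, T * W = X := by
  classical
  have hcol (j : l) : ∃ w, T *ᵥ w = X.col j := by
    obtain ⟨w, hw⟩ := h ⟨Pi.single j 1, rfl⟩
    exact ⟨w, by rwa [mulVecLin_apply, mulVecLin_apply, mulVec_single_one] at hw⟩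
  choose w hw using hcol
  refine ⟨of fun i j => w j i, ?_⟩
  ext i j
  exact congrFun (hw j) i

theorem rank_mul_mul_le_middle [StrongRankCondition R] [Fintype m]
    (A : Matrix n k R) (X : Matrix k l R) (C : Matrix l m R) : (A * X * C).rank ≤ X.rank :=
  (rank_mul_le_left _ _).trans (rank_mul_le_right _ _)

end CommSemiring

theorem mul_sub_mul_conjTranspose_sub_eq {α n : Type*} [Ring α] [StarRing α] [Fintype n]
    [DecidableEq n] {N M G : Matrix n n α} (hN : N.IsHermitian) (hM : M.IsHermitian)
    (hGN : G * N = N) (hGM : G * M * (1 - G)ᴴ = 0) :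
    G * (N - M) * Gᴴ - (N - M) = (1 - G) * M * (1 - G)ᴴ := by
  have hGNG : G * N * Gᴴ = N := by
    rw [hGN, ← hN.eq, ← conjTranspose_mul, hN.eq, hGN, hN.eq]
  have hGMG : G * M * Gᴴ = G * M := by
    rw [conjTranspose_sub, conjTranspose_one, Matrix.mul_sub, Matrix.mul_one, sub_eq_zero] at hGM
    exact hGM.symm
  have hGM' : (1 - G) * M * Gᴴ = 0 := by
    simpa [conjTranspose_mul, hM.eq, Matrix.mul_assoc] using congrArg conjTranspose hGM
  calc G * (N - M) * Gᴴ - (N - M) = M - G * M * Gᴴ := by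
        rw [Matrix.mul_sub, Matrix.sub_mul, hGNG]; abel
    _ = (1 - G) * M * (1 - G)ᴴ := by
        rw [hGMG, conjTranspose_sub, conjTranspose_one, Matrix.mul_sub, Matrix.mul_one, hGM']
        noncomm_ring

variable {𝕜 : Type*} [RCLike 𝕜] {l m n : Type*} [Fintype l] [Fintype m] [Fintype n]

theorem range_mulVecLin_mul_conjTranspose (S : Matrix m n 𝕜) :
    LinearMap.range (S * Sᴴ).mulVecLin = LinearMap.range S.mulVecLin := by
  refine Submodule.eq_of_le_of_finrank_eq ?_ (rank_self_mul_conjTranspose S)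
  rw [mulVecLin_mul]
  exact LinearMap.range_comp_le_range _ _

theorem exists_mul_conjTranspose_mul_eq_mul (S : Matrix m n 𝕜) (Y : Matrix n l 𝕜) :
    ∃ W : Matrix m l 𝕜, S * Sᴴ * W = S * Y := by
  refine exists_mul_eq_of_range_le ?_
  rw [range_mulVecLin_mul_conjTranspose, mulVecLin_mul]
  exact LinearMap.range_comp_le_range _ _

theorem exists_mul_mul_eq_self (B : Matrix m n 𝕜) : ∃ K : Matrix n m 𝕜, B * K * B = B := by
  classical
  obtain ⟨K, hK⟩ := exists_mul_conjTranspose_mul_eq_mul Bᴴ (1 : Matrix m m 𝕜)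
  rw [conjTranspose_conjTranspose, Matrix.mul_one] at hK
  refine ⟨K, ?_⟩
  have hD : Bᴴ * (B * (K * B - 1)) = 0 := by
    rw [← Matrix.mul_assoc, Matrix.mul_sub, ← Matrix.mul_assoc, hK, Matrix.mul_one, sub_self]
  have hD' : (B * (K * B - 1))ᴴ * (B * (K * B - 1)) = 0 := by
    rw [conjTranspose_mul, Matrix.mul_assoc, hD, Matrix.mul_zero]
  rwa [conjTranspose_mul_self_eq_zero, Matrix.mul_sub, Matrix.mul_one, ← Matrix.mul_assoc,
    sub_eq_zero] at hD'

theorem PosSemidef.exists_mul_mul_conjTranspose_mul_eq {M : Matrix n n 𝕜} (hM : M.PosSemidef)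
    (P : Matrix l n 𝕜) (Q : Matrix m n 𝕜) :
    ∃ W : Matrix m l 𝕜, Q * M * Qᴴ * W = Q * M * Pᴴ := by
  classical
  obtain ⟨R, rfl⟩ := CStarAlgebra.nonneg_iff_eq_star_mul_self.mp hM.nonneg
  obtain ⟨W, hW⟩ := exists_mul_conjTranspose_mul_eq_mul (Q * Rᴴ) (R * Pᴴ)
  refine ⟨W, ?_⟩
  simpa only [star_eq_conjTranspose, conjTranspose_mul, conjTranspose_conjTranspose,
    Matrix.mul_assoc] using hW

theorem mul_mul_conjTranspose_mono {B : Matrix m n 𝕜} {X Y : Matrix n n 𝕜} (hXY : X ≤ Y) :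
    B * X * Bᴴ ≤ B * Y * Bᴴ := by
  rw [le_iff, ← Matrix.sub_mul, ← Matrix.mul_sub]
  exact hXY.mul_mul_conjTranspose_same B

theorem exists_le_conj_of_le_mul_mul_conjTranspose {A : Matrix m m 𝕜} {B : Matrix m n 𝕜}
    {X : Matrix n n 𝕜} (hX : X.IsHermitian) (h : A ≤ B * X * Bᴴ) :
    ∃ K : Matrix n m 𝕜, A ≤ B * K * A * (B * K)ᴴ := by
  classical
  obtain ⟨L, hL⟩ := exists_mul_mul_eq_self B
  -- `P` is an idempotent onto `range B` and `Q` the complementary one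
  set P := B * L
  set Q := 1 - P with hQ
  set N := B * X * Bᴴ
  have hM : (N - A).PosSemidef := h
  obtain ⟨W, hW⟩ := hM.exists_mul_mul_conjTranspose_mul_eq P Q
  -- `G = B K = P (1 - Wᴴ Q)` clears the block `P (N - A) Qᴴ` against `Q (N - A) Qᴴ`
  refine ⟨L * (1 - Wᴴ * Q), ?_⟩
  have hPP : P * P = P := by rw [← Matrix.mul_assoc, hL]
  have hPN : P * N = N := by simp only [N, ← Matrix.mul_assoc, hL]
  have hQN : Q * N = 0 := by rw [Matrix.sub_mul, Matrix.one_mul, hPN, sub_self]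
  set G := B * (L * (1 - Wᴴ * Q))
  have hG : G = P * (1 - Wᴴ * Q) := (Matrix.mul_assoc _ _ _).symm
  have hGN : G * N = N := calc
    G * N = P * N - P * Wᴴ * (Q * N) := by rw [hG]; noncomm_ring
    _ = N := by rw [hQN, Matrix.mul_zero, sub_zero, hPN]
  have hGM : G * (N - A) * (1 - G)ᴴ = 0 := by
    have hWQ : Wᴴ * (Q * (N - A) * Qᴴ) = P * (N - A) * Qᴴ := by
      simpa [conjTranspose_mul, hM.1.eq, Matrix.mul_assoc] using congrArg conjTranspose hW
    have hGMQ : G * (N - A) * Qᴴ = 0 := calc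
      G * (N - A) * Qᴴ = P * (N - A) * Qᴴ - P * (Wᴴ * (Q * (N - A) * Qᴴ)) := by
          rw [hG]; noncomm_ring
      _ = 0 := by rw [hWQ, ← Matrix.mul_assoc, ← Matrix.mul_assoc, hPP, sub_self]
    have h1G : 1 - G = (1 + P * Wᴴ) * Q := by rw [hG, hQ]; noncomm_ring
    rw [h1G, conjTranspose_mul, ← Matrix.mul_assoc, hGMQ, Matrix.zero_mul]
  have key := mul_sub_mul_conjTranspose_sub_eq (isHermitian_mul_mul_conjTranspose B hX) hM.1
    hGN hGM
  rw [sub_sub_cancel] at key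
  rw [le_iff, key]
  exact hM.mul_mul_conjTranspose_same (1 - G)

theorem IsHermitian.rank_posPart_le [DecidableEq n] {A : Matrix n n 𝕜} (hA : A.IsHermitian) :
    (A⁺).rank ≤ Fintype.card {i // 0 < hA.eigenvalues i} := by
  rw [CFC.posPart_def, cfcₙ_eq_cfc, hA.cfc_eq, IsHermitian.cfc, Unitary.conjStarAlgAut_apply]
  refine (rank_mul_mul_le_middle _ _ _).trans ?_
  rw [rank_diagonal]
  refine Fintype.card_subtype_mono _ _ fun i hi => ?_
  simpa [posPart_eq_zero] using hi

theorem IsHermitian.card_pos_eigenvalues_le_rank [DecidableEq n] {A C : Matrix n n 𝕜}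
    (hA : A.IsHermitian) (hAC : A ≤ C) :
    Fintype.card {i // 0 < hA.eigenvalues i} ≤ C.rank := by
  set v : {i // 0 < hA.eigenvalues i} → n := Subtype.val
  set U : Matrix n n 𝕜 := ↑hA.eigenvectorUnitary
  set V := U.submatrix id v
  have hVAV : Vᴴ * A * V = diagonal fun i : {i // 0 < hA.eigenvalues i} =>
      (hA.eigenvalues i : 𝕜) := by
    have hdiag : star U * A * U = diagonal (RCLike.ofReal ∘ hA.eigenvalues) := by
      simpa [Unitary.conjStarAlgAut_apply] using hA.conjStarAlgAut_star_eigenvectorUnitary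
    have hsub : Vᴴ * A * V = (star U * A * U).submatrix v v := by
      rw [submatrix_mul _ _ v id v Function.bijective_id,
        submatrix_mul _ _ v id id Function.bijective_id, submatrix_id_id, conjTranspose_submatrix,
        star_eq_conjTranspose]
    rw [hsub, hdiag, submatrix_diagonal _ _ Subtype.val_injective]
    rfl
  have hPD : (Vᴴ * C * V).PosDef := by
    have hVAV_pos : (Vᴴ * A * V).PosDef := by
      rw [hVAV]
      exact PosDef.diagonal fun i => RCLike.ofReal_pos.mpr i.2
    simpa [Matrix.mul_sub, Matrix.sub_mul] using
      hVAV_pos.add_posSemidef (PosSemidef.conjTranspose_mul_mul_same hAC V)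
  calc Fintype.card {i // 0 < hA.eigenvalues i} = (Vᴴ * C * V).rank :=
        (rank_of_isUnit _ hPD.isUnit).symm
    _ ≤ C.rank := rank_mul_mul_le_middle _ _ _

end Matrix

theorem lmi_min_rank_solution {m n : ℕ} (A : Matrix (Fin m) (Fin m) ℂ)
    (B : Matrix (Fin m) (Fin n) ℂ) (hA : A.IsHermitian)
    (hcons : ∃ X : Matrix (Fin n) (Fin n) ℂ, X.IsHermitian ∧ (B * X * Bᴴ - A).PosSemidef) :
    IsLeast {r : ℕ | ∃ X : Matrix (Fin n) (Fin n) ℂ, X.IsHermitian ∧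
        (B * X * Bᴴ - A).PosSemidef ∧ r = X.rank} (iPos A) ∧
    (∃ X : Matrix (Fin n) (Fin n) ℂ, X.PosDef ∧ (B * X * Bᴴ - A).PosSemidef) := by
  obtain ⟨X₀, hX₀, hfeas⟩ := hcons
  obtain ⟨K, hK⟩ := exists_le_conj_of_le_mul_mul_conjTranspose hX₀ hfeas
  have hiPos : iPos A = Fintype.card {i // 0 < hA.eigenvalues i} := by simp [iPos, hA]
  have hlower (X : Matrix (Fin n) (Fin n) ℂ) (hX : A ≤ B * X * Bᴴ) : iPos A ≤ X.rank :=
    hiPos ▸ (hA.card_pos_eigenvalues_le_rank hX).trans (rank_mul_mul_le_middle _ _ _)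
  have hXfeas : A ≤ B * (K * A⁺ * Kᴴ) * Bᴴ := calc
    A ≤ B * K * A * (B * K)ᴴ := hK
    _ ≤ B * K * A⁺ * (B * K)ᴴ := mul_mul_conjTranspose_mono (CFC.le_posPart hA.isSelfAdjoint)
    _ = B * (K * A⁺ * Kᴴ) * Bᴴ := by rw [conjTranspose_mul]; simp only [Matrix.mul_assoc]
  refine ⟨⟨⟨K * A⁺ * Kᴴ, ?_, hXfeas, le_antisymm (hlower _ hXfeas) ?_⟩, ?_⟩, ⟨X₀⁺ + 1, ?_, ?_⟩⟩
  · exact ((CFC.posPart_nonneg A).posSemidef.mul_mul_conjTranspose_same K).isHermitian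
  · exact (rank_mul_mul_le_middle _ _ _).trans (hiPos ▸ hA.rank_posPart_le)
  · rintro r ⟨X, -, hX, rfl⟩
    exact hlower X hX
  · exact PosDef.posSemidef_add (CFC.posPart_nonneg X₀).posSemidef PosDef.one
  · refine (le_iff.mpr hfeas).trans (mul_mul_conjTranspose_mono ?_)
    exact (CFC.le_posPart hX₀.isSelfAdjoint).trans (le_add_of_nonneg_right PosSemidef.one.nonneg)
end
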